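/- arXiv:1810.04571 — 4 statements merged into one kernel-verified Lean document; each statement's English description precedes it below -/
import Mathlib

section
/- For $n=1,2,\dots$ and for $n=\infty$, let $x_n\in D_0$ and set $G_n(t):=\sup\{x_n(s):x_n(s)\le t\}$ (with $\sup\emptyset=0$). Assume there exist strictly increasing continuous bijections $\lambda_n:[0,\infty)\to[0,\infty)$ such that for every $t_0>0$, $\sup_{0\le t\le t_0}|\lambda_n(t)-t|\to 0$ and $\sup_{0\le t\le t_0}|x_n(\lambda_n(t))-x_\infty(t)|\to 0$ as $n\to\infty$. Then $G_n(t)\to G_\infty(t)$ for every continuity point $t\ge 0$ of $G_\infty$. -/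
open Set Filter

/-- If `xₙ → x∞` in the Skorokhod `J₁`-topology (expressed via time changes
`λₙ`, strictly increasing continuous bijections of `[0,∞)` converging uniformly on compacts
to the identity, with `xₙ ∘ λₙ → x∞` uniformly on compacts), where all `xₙ, x∞ ∈ D₀`, then
`Gₙ(t) → G∞(t)` at every continuity point `t ≥ 0` of `G∞`, where
`Gₙ(t) = sup{xₙ(s) : xₙ(s) ≤ t}`. -/
theorem stmt2 (x : ℕ → ℝ → ℝ) (xinf : ℝ → ℝ) (lam : ℕ → ℝ → ℝ)
    (hx_nonneg : ∀ n s, 0 ≤ s → 0 ≤ x n s)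
    (hx_mono : ∀ n s t, 0 ≤ s → s ≤ t → x n s ≤ x n t)
    (hx_rc : ∀ n t, 0 ≤ t → ContinuousWithinAt (x n) (Set.Ici t) t)
    (hx_top : ∀ n, Tendsto (x n) atTop atTop)
    (hxinf_nonneg : ∀ s, 0 ≤ s → 0 ≤ xinf s)
    (hxinf_mono : ∀ s t, 0 ≤ s → s ≤ t → xinf s ≤ xinf t)
    (hxinf_rc : ∀ t, 0 ≤ t → ContinuousWithinAt xinf (Set.Ici t) t)
    (hxinf_top : Tendsto xinf atTop atTop)
    (hlam_mono : ∀ n, StrictMono (lam n))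
    (hlam_cont : ∀ n, Continuous (lam n))
    (hlam_zero : ∀ n, lam n 0 = 0)
    (hlam_surj : ∀ n, Function.Surjective (lam n))
    (hconv : ∀ t0 > (0:ℝ), ∀ ε > (0:ℝ), ∃ N, ∀ n ≥ N, ∀ t ∈ Set.Icc (0:ℝ) t0,
      |lam n t - t| < ε ∧ |x n (lam n t) - xinf t| < ε)
    (G : ℕ → ℝ → ℝ) (hG : ∀ n t, G n t = sSup {y | (∃ s, 0 ≤ s ∧ x n s = y) ∧ y ≤ t})
    (Ginf : ℝ → ℝ) (hGinf : ∀ t, Ginf t = sSup {y | (∃ s, 0 ≤ s ∧ xinf s = y) ∧ y ≤ t}) :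
    ∀ t, 0 ≤ t → ContinuousAt Ginf t →
      Tendsto (fun n => G n t) atTop (nhds (Ginf t)) := by
  intro t ht hcont
  have hA0 : 0 ≤ Ginf t := by
    rw [hGinf]
    apply Real.sSup_nonneg
    rintro y ⟨⟨s, hs, rfl⟩, -⟩
    exact hxinf_nonneg s hs
  have hAt : Ginf t ≤ t := by
    rw [hGinf]
    exact Real.sSup_le (fun y hy => hy.2) ht
  have hGn_nonneg : ∀ n, 0 ≤ G n t := by
    intro n
    rw [hG]
    apply Real.sSup_nonneg
    rintro y ⟨⟨s, hs, rfl⟩, -⟩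
    exact hx_nonneg n s hs
  have hGn_le : ∀ n, G n t ≤ t := by
    intro n
    rw [hG]
    exact Real.sSup_le (fun y hy => hy.2) ht
  have hlam0 : ∀ n u, 0 ≤ u → 0 ≤ lam n u := by
    intro n u hu
    rw [← hlam_zero n]
    exact (hlam_mono n).monotone hu
  rw [tendsto_order]
  constructor
  · -- lower bound
    intro a ha
    rcases lt_or_ge a 0 with ha0 | ha0
    · exact Filter.Eventually.of_forall fun n => lt_of_lt_of_le ha0 (hGn_nonneg n)
    · -- find s ≥ 0 with a < xinf s < t
      obtain ⟨s, hs0, hyl, hyu⟩ : ∃ s, 0 ≤ s ∧ a < xinf s ∧ xinf s < t := by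
        rcases eq_or_lt_of_le hAt with hAeq | hAlt
        · -- Ginf t = t: use continuity
          have htpos : 0 < t := lt_of_le_of_lt ha0 (lt_of_lt_of_le ha hAt)
          rw [Metric.continuousAt_iff] at hcont
          obtain ⟨δ, hδ, hδc⟩ := hcont (t - a) (by linarith [lt_of_lt_of_le ha hAt])
          set t' := t - min (δ/2) (t/2) with ht'def
          have ht'lt : t' < t := by
            have : 0 < min (δ/2) (t/2) := lt_min (by linarith) (by linarith)
            simp only [ht'def]; linarith
          have ht'pos : 0 < t' := by
            have : min (δ/2) (t/2) ≤ t/2 := min_le_right _ _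
            simp only [ht'def]; linarith
          have hdist : dist t' t < δ := by
            rw [Real.dist_eq]
            have h1 : 0 < min (δ/2) (t/2) := lt_min (by linarith) (by linarith)
            have h2 : min (δ/2) (t/2) ≤ δ/2 := min_le_left _ _
            rw [abs_of_nonpos (by simp only [ht'def]; linarith)]
            simp only [ht'def]; linarith
          have hg : a < Ginf t' := by
            have := hδc hdist
            rw [Real.dist_eq, abs_lt] at this
            linarith [hAeq]
          have hne : {y | (∃ s, 0 ≤ s ∧ xinf s = y) ∧ y ≤ t'}.Nonempty := by
            by_contra h
            rw [Set.not_nonempty_iff_eq_empty] at h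
            rw [hGinf, h, Real.sSup_empty] at hg
            linarith
          rw [hGinf] at hg
          obtain ⟨y, hy, hay⟩ := exists_lt_of_lt_csSup hne hg
          obtain ⟨⟨s, hs0, rfl⟩, hyt'⟩ := hy
          exact ⟨s, hs0, hay, lt_of_le_of_lt hyt' ht'lt⟩
        · -- Ginf t < t
          have hne : {y | (∃ s, 0 ≤ s ∧ xinf s = y) ∧ y ≤ t}.Nonempty := by
            by_contra h
            rw [Set.not_nonempty_iff_eq_empty] at h
            have : Ginf t = 0 := by rw [hGinf, h, Real.sSup_empty]
            linarith
          have hbdd : BddAbove {y | (∃ s, 0 ≤ s ∧ xinf s = y) ∧ y ≤ t} :=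
            ⟨t, fun y hy => hy.2⟩
          have ha' : a < sSup {y | (∃ s, 0 ≤ s ∧ xinf s = y) ∧ y ≤ t} := by
            rw [← hGinf]; exact ha
          obtain ⟨y, hy, hay⟩ := exists_lt_of_lt_csSup hne ha'
          obtain ⟨⟨s, hs0, rfl⟩, hyt⟩ := hy
          refine ⟨s, hs0, hay, ?_⟩
          have : xinf s ≤ Ginf t := by
            rw [hGinf]
            exact le_csSup hbdd ⟨⟨s, hs0, rfl⟩, hyt⟩
          linarith
      -- use convergence at s
      set ε₁ := min (xinf s - a) (t - xinf s) with hε₁def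
      have hε₁ : 0 < ε₁ := lt_min (by linarith) (by linarith)
      obtain ⟨N, hN⟩ := hconv (s + 1) (by linarith) ε₁ hε₁
      rw [Filter.eventually_atTop]
      refine ⟨N, fun n hn => ?_⟩
      have hs_mem : s ∈ Set.Icc (0:ℝ) (s+1) := ⟨hs0, by linarith⟩
      have hclose := (hN n hn s hs_mem).2
      rw [abs_lt] at hclose
      have h1 : ε₁ ≤ xinf s - a := min_le_left _ _
      have h2 : ε₁ ≤ t - xinf s := min_le_right _ _
      have hyn_gt : a < x n (lam n s) := by linarith
      have hyn_lt : x n (lam n s) ≤ t := by linarith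
      have hmem : x n (lam n s) ∈ {y | (∃ s', 0 ≤ s' ∧ x n s' = y) ∧ y ≤ t} :=
        ⟨⟨lam n s, hlam0 n s hs0, rfl⟩, hyn_lt⟩
      have : x n (lam n s) ≤ G n t := by
        rw [hG]
        exact le_csSup ⟨t, fun y hy => hy.2⟩ hmem
      linarith
  · -- upper bound
    intro b hb
    rcases eq_or_lt_of_le hAt with hAeq | hAlt
    · exact Filter.Eventually.of_forall fun n =>
        lt_of_le_of_lt (hGn_le n) (by rw [← hAeq]; exact hb)
    · set A := Ginf t with hAdef
      set ε' := min ((b - A)/3) ((t - A)/2) with hε'def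
      have hε' : 0 < ε' := lt_min (by linarith) (by linarith)
      have hε'1 : ε' ≤ (b - A)/3 := min_le_left _ _
      have hε'2 : ε' ≤ (t - A)/2 := min_le_right _ _
      -- continuity gives δ
      rw [Metric.continuousAt_iff] at hcont
      obtain ⟨δ₀, hδ₀, hδc⟩ := hcont ε' hε'
      set δ := δ₀ / 2 with hδdef
      have hδ : 0 < δ := by linarith
      have hB : Ginf (t + δ) < A + ε' := by
        have hd : dist (t + δ) t < δ₀ := by
          rw [Real.dist_eq, abs_of_nonneg (by linarith)]; linarith
        have := hδc hd
        rw [Real.dist_eq, abs_lt] at this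
        linarith
      set B := Ginf (t + δ) with hBdef
      have hBA : A ≤ B := by
        rw [hAdef, hBdef, hGinf, hGinf]
        rcases Set.eq_empty_or_nonempty {y | (∃ s, 0 ≤ s ∧ xinf s = y) ∧ y ≤ t} with h | h
        · rw [h, Real.sSup_empty]
          apply Real.sSup_nonneg
          rintro y ⟨⟨s, hs, rfl⟩, -⟩
          exact hxinf_nonneg s hs
        · apply csSup_le_csSup ⟨t + δ, fun y hy => hy.2⟩ h
          rintro y ⟨hy1, hy2⟩
          exact ⟨hy1, by linarith⟩
      -- the threshold set
      set T := {s : ℝ | 0 ≤ s ∧ t + δ/2 < xinf s} with hTdef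
      have hT_ne : T.Nonempty := by
        obtain ⟨s₀, hs₀⟩ := (hxinf_top.eventually (eventually_gt_atTop (t + δ/2))).exists_forall_of_atTop
        exact ⟨max s₀ 0, le_max_right _ _, hs₀ _ (le_max_left _ _)⟩
      have hT_bdd : BddBelow T := ⟨0, fun s hs => hs.1⟩
      set sstar := sInf T with hsdef
      have hsstar0 : 0 ≤ sstar := le_csInf hT_ne fun s hs => hs.1
      have h_below : ∀ u, 0 ≤ u → u < sstar → xinf u ≤ B := by
        intro u hu0 hus
        have h1 : xinf u ≤ t + δ/2 := by
          by_contra h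
          push_neg at h
          exact absurd (csInf_le hT_bdd ⟨hu0, h⟩) (not_le.mpr hus)
        rw [hBdef, hGinf]
        exact le_csSup ⟨t + δ, fun y hy => hy.2⟩ ⟨⟨u, hu0, rfl⟩, by linarith⟩
      have h_right : ∀ u, sstar < u → t + δ/2 < xinf u := by
        intro u hu
        obtain ⟨s, hsT, hslt⟩ := exists_lt_of_csInf_lt hT_ne hu
        exact lt_of_lt_of_le hsT.2 (hxinf_mono s u hsT.1 (le_of_lt hslt))
      have hstar_ge : t + δ/2 ≤ xinf sstar := by
        have htend : Tendsto xinf (nhdsWithin sstar (Set.Ioi sstar)) (nhds (xinf sstar)) :=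
          (hxinf_rc sstar hsstar0).mono_left (nhdsWithin_mono _ Set.Ioi_subset_Ici_self)
        exact ge_of_tendsto htend
          (eventually_nhdsWithin_of_forall fun u hu => le_of_lt (h_right u hu))
      have hstar_gt : t + δ < xinf sstar := by
        by_contra h
        push_neg at h
        have hmem : xinf sstar ≤ B := by
          rw [hBdef, hGinf]
          exact le_csSup ⟨t + δ, fun y hy => hy.2⟩ ⟨⟨sstar, hsstar0, rfl⟩, h⟩
        linarith
      -- now use uniform convergence on [0, sstar + 1]
      set η := min ε' (δ/2) with hηdef
      have hη : 0 < η := lt_min hε' (by linarith)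
      have hη1 : η ≤ ε' := min_le_left _ _
      have hη2 : η ≤ δ/2 := min_le_right _ _
      obtain ⟨N, hN⟩ := hconv (sstar + 1) (by linarith) η hη
      rw [Filter.eventually_atTop]
      refine ⟨N, fun n hn => ?_⟩
      have hkey : ∀ y ∈ {y | (∃ s', 0 ≤ s' ∧ x n s' = y) ∧ y ≤ t}, y ≤ A + 2 * ε' := by
        rintro y ⟨⟨s', hs'0, rfl⟩, hyt⟩
        obtain ⟨u, hu⟩ := hlam_surj n s'
        have hu0 : 0 ≤ u := by
          have : lam n 0 ≤ lam n u := by rw [hlam_zero n, hu]; exact hs'0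
          exact (hlam_mono n).le_iff_le.mp this
        rcases lt_or_ge u sstar with h1 | h2
        · have hc := (hN n hn u ⟨hu0, by linarith⟩).2
          rw [abs_lt] at hc
          rw [← hu]
          have := h_below u hu0 h1
          linarith
        · exfalso
          have hc := (hN n hn sstar ⟨hsstar0, by linarith⟩).2
          rw [abs_lt] at hc
          have hst : t < x n (lam n sstar) := by linarith
          have hmono : x n (lam n sstar) ≤ x n s' := by
            rw [← hu]
            exact hx_mono n (lam n sstar) (lam n u) (hlam0 n sstar hsstar0)
              ((hlam_mono n).monotone h2)
          linarith
      have : G n t ≤ A + 2 * ε' := by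
        rw [hG]
        exact Real.sSup_le hkey (by linarith)
      linarith
end

section
/- For $n=1,2,\dots$ and $n=\infty$, let $x_n\in D_0$ and set $D_n(t):=\inf\{x_n(s):x_n(s)>t\}$. Assume there exist strictly increasing continuous bijections $\lambda_n:[0,\infty)\to[0,\infty)$ such that for every $t_0>0$, $\sup_{0\le t\le t_0}|\lambda_n(t)-t|\to 0$ and $\sup_{0\le t\le t_0}|x_n(\lambda_n(t))-x_\infty(t)|\to 0$. Then $D_n(t)\to D_\infty(t)$ for every continuity point $t\ge 0$ of $D_\infty$. -/
open Set Filter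

/-- If `xₙ → x∞` in the Skorokhod `J₁`-topology (expressed via time changes
`λₙ`, strictly increasing continuous bijections of `[0,∞)` converging uniformly on compacts
to the identity, with `xₙ ∘ λₙ → x∞` uniformly on compacts), where all `xₙ, x∞ ∈ D₀`, then
`Dₙ(t) → D∞(t)` at every continuity point `t ≥ 0` of `D∞`, where
`Dₙ(t) = inf{xₙ(s) : xₙ(s) > t}`. -/
theorem stmt3 (x : ℕ → ℝ → ℝ) (xinf : ℝ → ℝ) (lam : ℕ → ℝ → ℝ)
    (hx_nonneg : ∀ n s, 0 ≤ s → 0 ≤ x n s)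
    (hx_mono : ∀ n s t, 0 ≤ s → s ≤ t → x n s ≤ x n t)
    (hx_rc : ∀ n t, 0 ≤ t → ContinuousWithinAt (x n) (Set.Ici t) t)
    (hx_top : ∀ n, Tendsto (x n) atTop atTop)
    (hxinf_nonneg : ∀ s, 0 ≤ s → 0 ≤ xinf s)
    (hxinf_mono : ∀ s t, 0 ≤ s → s ≤ t → xinf s ≤ xinf t)
    (hxinf_rc : ∀ t, 0 ≤ t → ContinuousWithinAt xinf (Set.Ici t) t)
    (hxinf_top : Tendsto xinf atTop atTop)
    (hlam_mono : ∀ n, StrictMono (lam n))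
    (hlam_cont : ∀ n, Continuous (lam n))
    (hlam_zero : ∀ n, lam n 0 = 0)
    (hlam_surj : ∀ n, Function.Surjective (lam n))
    (hconv : ∀ t0 > (0:ℝ), ∀ ε > (0:ℝ), ∃ N, ∀ n ≥ N, ∀ t ∈ Set.Icc (0:ℝ) t0,
      |lam n t - t| < ε ∧ |x n (lam n t) - xinf t| < ε)
    (D : ℕ → ℝ → ℝ) (hDn : ∀ n t, D n t = sInf {y | (∃ s, 0 ≤ s ∧ x n s = y) ∧ t < y})
    (Dinf : ℝ → ℝ) (hDinf : ∀ t, Dinf t = sInf {y | (∃ s, 0 ≤ s ∧ xinf s = y) ∧ t < y}) :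
    ∀ t, 0 ≤ t → ContinuousAt Dinf t →
      Tendsto (fun n => D n t) atTop (nhds (Dinf t)) := by
  intro t ht hcont
  rw [Metric.tendsto_atTop]
  intro ε hε
  obtain ⟨δ, hδpos, hδc⟩ := Metric.continuousAt_iff.mp hcont (ε/4) (by linarith)
  have hSne : ∀ n (c : ℝ), {y | (∃ s, 0 ≤ s ∧ x n s = y) ∧ c < y}.Nonempty := by
    intro n c
    obtain ⟨s, h1, h2⟩ :=
      (((hx_top n).eventually (eventually_gt_atTop c)).and (eventually_ge_atTop 0)).exists
    exact ⟨x n s, ⟨s, h2, rfl⟩, h1⟩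
  have hSinfne : ∀ c : ℝ, {y | (∃ s, 0 ≤ s ∧ xinf s = y) ∧ c < y}.Nonempty := by
    intro c
    obtain ⟨s, h1, h2⟩ :=
      ((hxinf_top.eventually (eventually_gt_atTop c)).and (eventually_ge_atTop 0)).exists
    exact ⟨xinf s, ⟨s, h2, rfl⟩, h1⟩
  have hbdd : ∀ (f : ℝ → ℝ) (c : ℝ), BddBelow {y | (∃ s, 0 ≤ s ∧ f s = y) ∧ c < y} :=
    fun f c => ⟨c, fun y hy => le_of_lt hy.2⟩
  set η := min (δ/2) (min (ε/4) 1) with hηdef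
  have hηpos : 0 < η := lt_min (by linarith) (lt_min (by linarith) one_pos)
  have hηδ : η ≤ δ/2 := min_le_left _ _
  have hηε : η ≤ ε/4 := le_trans (min_le_right _ _) (min_le_left _ _)
  have hη1 : η ≤ 1 := le_trans (min_le_right _ _) (min_le_right _ _)
  have hlam0le : ∀ n s, 0 ≤ s → 0 ≤ lam n s := fun n s hs => by
    have h := (hlam_mono n).monotone hs
    rwa [hlam_zero n] at h
  -- upper bound data
  have hdist1 : dist (t + δ/2) t < δ := by
    rw [Real.dist_eq, show t + δ/2 - t = δ/2 by ring, abs_of_pos (by linarith)]; linarith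
  have hDup : Dinf (t + δ/2) < Dinf t + ε/4 := by
    have h := hδc hdist1
    rw [Real.dist_eq, abs_lt] at h; linarith
  obtain ⟨y, hyS, hylt⟩ :=
    Real.lt_sInf_add_pos (hSinfne (t + δ/2)) (show (0:ℝ) < ε/4 by linarith)
  rw [← hDinf (t + δ/2)] at hylt
  obtain ⟨⟨s, hs0, hxsy⟩, htyδ⟩ := hyS
  obtain ⟨N1, hN1⟩ := hconv (s + 1) (by linarith) η hηpos
  -- lower bound data
  obtain ⟨t0, ht0a, ht0b⟩ :=
    ((hxinf_top.eventually (eventually_gt_atTop (Dinf t + 1))).and (eventually_ge_atTop 1)).exists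
  obtain ⟨N2, hN2⟩ := hconv t0 (by linarith) η hηpos
  refine ⟨max N1 N2, fun n hn => ?_⟩
  have hn1 : n ≥ N1 := le_trans (le_max_left _ _) hn
  have hn2 : n ≥ N2 := le_trans (le_max_right _ _) hn
  rw [Real.dist_eq, abs_lt]
  constructor
  · -- lower bound
    have key : ∀ u, 0 ≤ u → t < x n u → Dinf t - ε/2 ≤ x n u := by
      intro u hu htu
      by_cases hc : Dinf t - ε/2 ≤ t
      · linarith
      push_neg at hc
      obtain ⟨s', hs'⟩ := hlam_surj n u
      have hs'0 : 0 ≤ s' := by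
        rw [← (hlam_mono n).le_iff_le (a := 0) (b := s'), hlam_zero n, hs']
        exact hu
      by_cases hst : s' ≤ t0
      · have h := (hN2 n hn2 s' ⟨hs'0, hst⟩).2
        rw [hs'] at h
        rw [abs_lt] at h
        have hxs' : t - δ/2 < xinf s' := by linarith
        have hge : Dinf (t - δ/2) ≤ xinf s' := by
          rw [hDinf]
          exact csInf_le (hbdd xinf _) ⟨⟨s', hs'0, rfl⟩, hxs'⟩
        have hdist2 : dist (t - δ/2) t < δ := by
          rw [Real.dist_eq, show t - δ/2 - t = -(δ/2) by ring, abs_neg,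
            abs_of_pos (by linarith)]
          linarith
        have hDlow : Dinf t - ε/4 < Dinf (t - δ/2) := by
          have h2 := hδc hdist2
          rw [Real.dist_eq, abs_lt] at h2; linarith
        linarith
      · push_neg at hst
        have h := (hN2 n hn2 t0 ⟨by linarith, le_refl t0⟩).2
        rw [abs_lt] at h
        have hmono := hx_mono n (lam n t0) (lam n s')
          (hlam0le n t0 (by linarith)) ((hlam_mono n).monotone hst.le)
        rw [hs'] at hmono
        linarith
    have hDge : Dinf t - ε/2 ≤ D n t := by
      rw [hDn]
      apply le_csInf (hSne n t)
      rintro y' ⟨⟨u, hu0, rfl⟩, hty'⟩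
      exact key u hu0 hty'
    linarith
  · -- upper bound
    have h := (hN1 n hn1 s ⟨hs0, by linarith⟩).2
    rw [hxsy, abs_lt] at h
    have hmem : x n (lam n s) ∈ {y | (∃ s', 0 ≤ s' ∧ x n s' = y) ∧ t < y} :=
      ⟨⟨lam n s, hlam0le n s hs0, rfl⟩, by linarith⟩
    have hle : D n t ≤ x n (lam n s) := by
      rw [hDn]; exact csInf_le (hbdd (x n) t) hmem
    linarith
end

section
/- Let $T$ be a CEMPT on $(X,\mathcal{B},\mu)$ with partition $X=A_1+\cdots+A_d+Y$ as above (dynamical separation, $\mu(A_j)=\infty$, $0<\mu(Y)<\infty$). Define for a.e. $x$: the return times $\varphi(t)(x)=\sum_{k=0}^{\lfloor t\rfloor}\varphi(T_Y^k x)$ where $T_Y x=T^{\varphi(x)}x$ is the first return map, the occupation processes $\eta_j(t)(x)=\sum_{k=0}^{\lfloor t\rfloor}\ell_j(T_Y^k x)$, and right-continuous inverses $S_{A_j}^{-1}(t)=\min\{u\ge 0: S_{A_j}(u)>t\}$, $\eta_j^{-1}(t)=\min\{u\ge 0:\eta_j(u)>t\}$. Then the discrete Williams formula holds: for all $t\ge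 0$ and each $j$, $S_{A_j}^{-1}(t) = \lfloor t+1\rfloor + \sum_{i\ne j}\eta_i(\eta_j^{-1}(t)) + \eta_j^{-1}(t)$, a.e. -/
open MeasureTheory Set Filter

/-- The sequence of successive return times to `Y` along the orbit of `x`. -/
def tauSeq {X : Type*} (T : X → X) (φ : X → ℕ) (x : X) : ℕ → ℕ
  | 0 => 0
  | (k+1) => tauSeq T φ x k + φ (T^[tauSeq T φ x k] x)

/-- In a conservative ergodic system, a.e. point visits any set of positive measure
infinitely often. -/
theorem freq_visits {X : Type*} [MeasurableSpace X] {μ : Measure X}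
    {T : X → X} (hT : Measurable T) (hcons : Conservative T μ)
    (herg : Ergodic T μ) {s : Set X} (hs : MeasurableSet s) (hμs : μ s ≠ 0) :
    ∀ᵐ x ∂μ, ∃ᶠ n in atTop, T^[n] x ∈ s := by
  set E : Set X := {x | ∃ᶠ n in atTop, T^[n] x ∈ s} with hE
  have hEmeas : MeasurableSet E := by
    have : E = ⋂ N, ⋃ n, ⋃ _ : N ≤ n, T^[n] ⁻¹' s := by
      ext x
      simp [hE, frequently_atTop, Set.mem_iInter, Set.mem_iUnion]
    rw [this]
    exact MeasurableSet.iInter fun N => MeasurableSet.iUnion fun n =>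
      MeasurableSet.iUnion fun _ => (hT.iterate n) hs
  have hpre : T ⁻¹' E = E := by
    ext x
    simp only [Set.mem_preimage, hE, Set.mem_setOf_eq, frequently_atTop]
    constructor
    · intro h N
      obtain ⟨n, hn, hp⟩ := h N
      exact ⟨n + 1, by omega, by rwa [Function.iterate_succ_apply]⟩
    · intro h N
      obtain ⟨n, hn, hp⟩ := h (N + 1)
      refine ⟨n - 1, by omega, ?_⟩
      have hn1 : n - 1 + 1 = n := by omega
      have hp' := hp
      rw [← hn1] at hp'
      rwa [Function.iterate_succ_apply] at hp'
  rcases herg.ae_empty_or_univ hEmeas hpre with h | h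
  · exfalso
    have h0 : μ E = 0 := ae_eq_empty.mp h
    have h1 : ∀ᵐ x ∂μ, x ∈ s → x ∈ E :=
      hcons.ae_mem_imp_frequently_image_mem hs.nullMeasurableSet
    have h2 : ∀ᵐ x ∂μ, x ∉ E := measure_eq_zero_iff_ae_notMem.mp h0
    have h3 : ∀ᵐ x ∂μ, x ∉ s := by
      filter_upwards [h1, h2] with x hx1 hx2
      exact fun hxs => hx2 (hx1 hxs)
    exact hμs (measure_eq_zero_iff_ae_notMem.mpr h3)
  · have h0 : μ Eᶜ = 0 := ae_eq_univ.mp h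
    filter_upwards [measure_eq_zero_iff_ae_notMem.mp h0] with x hx
    have hxE : x ∈ E := Set.not_notMem.mp hx
    exact hxE

/-- Discrete Williams formula: For a CEMPT `T` with dynamically separating
partition `X = A₁ + ⋯ + A_d + Y`, first return time `φ`, first return map `T_Y`,
excursion occupation processes `ηⱼ(t) = ∑_{k=0}^{⌊t⌋} ℓⱼ(T_Y^k x)` and right-continuous
inverses, one has a.e., for all `t ≥ 0` and each `j`:
`S_{Aⱼ}⁻¹(t) = ⌊t+1⌋ + ∑_{i≠j} ηᵢ(ηⱼ⁻¹(t)) + ηⱼ⁻¹(t)`. -/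
theorem stmt7 {X : Type*} [MeasurableSpace X] (μ : Measure X) [SigmaFinite μ]
    (T : X → X) (hT : MeasurePreserving T μ μ) (hcons : Conservative T μ)
    (herg : Ergodic T μ) (hXinf : μ Set.univ = ⊤)
    (d : ℕ) (A : Fin d → Set X) (Y : Set X)
    (hAmeas : ∀ j, MeasurableSet (A j)) (hYmeas : MeasurableSet Y)
    (hdisj : ∀ i j, i ≠ j → Disjoint (A i) (A j)) (hdisjY : ∀ j, Disjoint (A j) Y)
    (hcover : (⋃ j, A j) ∪ Y = Set.univ)
    (hAinf : ∀ j, μ (A j) = ⊤) (hYpos : 0 < μ Y) (hYfin : μ Y < ⊤)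
    (hsep : ∀ x (i j : Fin d) (n : ℕ), i ≠ j → x ∈ A i → T^[n] x ∈ A j → 1 ≤ n →
      ∃ k, 1 ≤ k ∧ k < n ∧ T^[k] x ∈ Y)
    (φ : X → ℕ) (hφ : ∀ x, φ x = sInf {k | 1 ≤ k ∧ T^[k] x ∈ Y})
    (TY : X → X) (hTY : ∀ x, TY x = T^[φ x] x)
    (ℓ : Fin d → X → ℕ)
    (hℓ : ∀ j x, ℓ j x =
      ∑ k ∈ Finset.Icc 1 (φ x), Set.indicator (A j) (fun _ => 1) (T^[k] x))
    (η : Fin d → ℕ → X → ℕ)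
    (hη : ∀ i u x, η i u x = ∑ k ∈ Finset.range (u + 1), ℓ i (TY^[k] x))
    (ηinv : Fin d → ℝ → X → ℕ)
    (hηinv : ∀ j t x, ηinv j t x = sInf {u : ℕ | t < (η j u x : ℝ)})
    (S : Set X → ℕ → X → ℕ)
    (hS : ∀ B u x, S B u x =
      ∑ k ∈ Finset.Icc 1 u, Set.indicator B (fun _ => 1) (T^[k] x))
    (Sinv : Fin d → ℝ → X → ℕ)
    (hSinv : ∀ j t x, Sinv j t x = sInf {u : ℕ | t < (S (A j) u x : ℝ)}) :
    ∀ᵐ x ∂μ, ∀ t : ℝ, 0 ≤ t → ∀ j : Fin d,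
      Sinv j t x =
        Nat.floor (t + 1) + (∑ i ∈ Finset.univ.erase j, η i (ηinv j t x) x)
          + ηinv j t x := by
  have hTm : Measurable T := hT.measurable
  have hYfreq : ∀ᵐ x ∂μ, ∃ᶠ n in atTop, T^[n] x ∈ Y :=
    freq_visits hTm hcons herg hYmeas hYpos.ne'
  have hAfreq : ∀ j, ∀ᵐ x ∂μ, ∃ᶠ n in atTop, T^[n] x ∈ A j := fun j =>
    freq_visits hTm hcons herg (hAmeas j) (by rw [hAinf j]; simp)
  filter_upwards [hYfreq, ae_all_iff.2 hAfreq] with x hxY hxA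
  intro t ht j
  -- `τ k` : time of the k-th return to Y
  set τ : ℕ → ℕ := tauSeq T φ x with hτdef
  have hτ0 : τ 0 = 0 := rfl
  have hτs : ∀ k, τ (k+1) = τ k + φ (T^[τ k] x) := fun k => rfl
  -- basic facts about φ along the orbit
  have hhit : ∀ m : ℕ, ∃ k, 1 ≤ k ∧ T^[k] (T^[m] x) ∈ Y := by
    intro m
    obtain ⟨n, hn, hnY⟩ := frequently_atTop.mp hxY (m + 1)
    refine ⟨n - m, by omega, ?_⟩
    rw [← Function.iterate_add_apply]
    have h1 : n - m + m = n := by omega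
    rwa [h1]
  have hφmem : ∀ m : ℕ, 1 ≤ φ (T^[m] x) ∧ T^[φ (T^[m] x)] (T^[m] x) ∈ Y := by
    intro m
    rw [hφ]
    exact Nat.sInf_mem (hhit m)
  have hφmin : ∀ m k, 1 ≤ k → k < φ (T^[m] x) → T^[k] (T^[m] x) ∉ Y := by
    intro m k h1 h2 hk
    rw [hφ] at h2
    exact Nat.notMem_of_lt_sInf h2 ⟨h1, hk⟩
  have hτlt : ∀ k, τ k < τ (k+1) := by
    intro k
    have := (hφmem (τ k)).1
    rw [hτs]
    omega
  have hτge : ∀ k, k ≤ τ k := by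
    intro k
    induction k with
    | zero => omega
    | succ k ih => have := hτlt k; omega
  have hτY : ∀ k, T^[τ (k+1)] x ∈ Y := by
    intro k
    have h := (hφmem (τ k)).2
    rw [← Function.iterate_add_apply, Nat.add_comm, ← hτs] at h
    exact h
  have hτnotY : ∀ k m, τ k < m → m < τ (k+1) → T^[m] x ∉ Y := by
    intro k m h1 h2
    have h3 := hφmin (τ k) (m - τ k) (by omega) (by have := hτs k; omega)
    rw [← Function.iterate_add_apply] at h3
    have e : m - τ k + τ k = m := by omega
    rwa [e] at h3
  have hTYiter : ∀ k, TY^[k] x = T^[τ k] x := by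
    intro k
    induction k with
    | zero => rfl
    | succ k ih =>
      rw [Function.iterate_succ_apply', ih, hTY, ← Function.iterate_add_apply,
        Nat.add_comm, ← hτs]
  -- basic facts about S
  have hS0 : ∀ B, S B 0 x = 0 := by intro B; rw [hS]; simp
  have hSstep : ∀ B u, S B (u+1) x
      = S B u x + Set.indicator B (fun _ => (1:ℕ)) (T^[u+1] x) := by
    intro B u
    rw [hS, hS, Finset.sum_Icc_succ_top (by omega : 1 ≤ u + 1)]
  have hSIoc : ∀ B u, S B u x
      = ∑ m ∈ Finset.Ioc 0 u, Set.indicator B (fun _ => (1:ℕ)) (T^[m] x) := by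
    intro B u
    rw [hS]
    congr 1
  have hSblock : ∀ B u v, u ≤ v → S B v x
      = S B u x + ∑ m ∈ Finset.Ioc u v, Set.indicator B (fun _ => (1:ℕ)) (T^[m] x) := by
    intro B u v huv
    rw [hSIoc, hSIoc, ← Finset.sum_Ioc_consecutive _ (Nat.zero_le u) huv]
  have hSmono : ∀ B u v, u ≤ v → S B u x ≤ S B v x := by
    intro B u v huv
    rw [hSblock B u v huv]
    exact Nat.le_add_right _ _
  -- the excursion sums
  have hℓblock : ∀ (jj : Fin d) k, ℓ jj (TY^[k] x)
      = ∑ m ∈ Finset.Ioc (τ k) (τ (k+1)),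
          Set.indicator (A jj) (fun _ => (1:ℕ)) (T^[m] x) := by
    intro jj k
    rw [hTYiter, hℓ]
    have key : (Finset.Icc 1 (φ (T^[τ k] x))).map (addLeftEmbedding (τ k))
        = Finset.Ioc (τ k) (τ (k+1)) := by
      ext p
      simp only [Finset.mem_map, Finset.mem_Icc, Finset.mem_Ioc]
      constructor
      · rintro ⟨a, ⟨ha1, ha2⟩, rfl⟩
        have e : (addLeftEmbedding (τ k)) a = τ k + a := rfl
        rw [e]
        constructor
        · omega
        · rw [hτs]; omega
      · rintro ⟨h1, h2⟩
        rw [hτs] at h2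
        refine ⟨p - τ k, ⟨by omega, by omega⟩, ?_⟩
        have e : (addLeftEmbedding (τ k)) (p - τ k) = τ k + (p - τ k) := rfl
        rw [e]; omega
    rw [← key, Finset.sum_map]
    refine Finset.sum_congr rfl fun m _ => ?_
    have h1 : T^[m] (T^[τ k] x) = T^[m + τ k] x :=
      (Function.iterate_add_apply T m (τ k) x).symm
    rw [h1]
    have h2 : (addLeftEmbedding (τ k)) m = τ k + m := rfl
    rw [h2, Nat.add_comm (τ k) m]
  have hηS : ∀ (jj : Fin d) n, η jj n x = S (A jj) (τ (n+1)) x := by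
    intro jj n
    induction n with
    | zero =>
      rw [hη, Finset.sum_range_one, hℓblock jj 0,
        hSblock (A jj) 0 (τ 1) (Nat.zero_le _), hS0, hτ0]
      simp
    | succ n ih =>
      rw [hη, Finset.sum_range_succ, ← hη, ih, hℓblock jj (n+1),
        hSblock (A jj) (τ (n+1)) (τ (n+2)) (le_of_lt (hτlt (n+1)))]
  -- counting visits to Y
  have hYblock : ∀ k, ∑ m ∈ Finset.Ioc (τ k) (τ (k+1)),
      Set.indicator Y (fun _ => (1:ℕ)) (T^[m] x) = 1 := by
    intro k
    rw [Finset.sum_eq_single_of_mem (τ (k+1))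
      (Finset.mem_Ioc.mpr ⟨hτlt k, le_refl _⟩)]
    · exact Set.indicator_of_mem (hτY k) _
    · intro m hm hne
      obtain ⟨h1, h2⟩ := Finset.mem_Ioc.mp hm
      exact Set.indicator_of_notMem (hτnotY k m h1 (lt_of_le_of_ne h2 hne)) _
  have hYcount : ∀ k, ∑ m ∈ Finset.Ioc 0 (τ k),
      Set.indicator Y (fun _ => (1:ℕ)) (T^[m] x) = k := by
    intro k
    induction k with
    | zero => rw [hτ0]; simp
    | succ k ih =>
      rw [← Finset.sum_Ioc_consecutive _ (Nat.zero_le (τ k)) (le_of_lt (hτlt k)),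
        ih, hYblock k]
  -- pointwise partition of unity
  have hpart : ∀ y : X, Set.indicator Y (fun _ => (1:ℕ)) y
      + ∑ i, Set.indicator (A i) (fun _ => (1:ℕ)) y = 1 := by
    intro y
    have hy : y ∈ (⋃ i, A i) ∪ Y := hcover ▸ Set.mem_univ y
    rcases hy with hA' | hY'
    · obtain ⟨i, hi⟩ := Set.mem_iUnion.mp hA'
      rw [Set.indicator_of_notMem (Set.disjoint_left.mp (hdisjY i) hi)]
      rw [Finset.sum_eq_single_of_mem i (Finset.mem_univ i)]
      · rw [Set.indicator_of_mem hi]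
      · intro b _ hb
        exact Set.indicator_of_notMem
          (fun h => Set.disjoint_left.mp (hdisj b i hb) h hi) _
    · have h0 : ∑ i, Set.indicator (A i) (fun _ => (1:ℕ)) y = 0 :=
        Finset.sum_eq_zero fun i _ =>
          Set.indicator_of_notMem (Set.disjoint_right.mp (hdisjY i) hY') _
      rw [Set.indicator_of_mem hY', h0]
  -- total time identity
  have hτcount : ∀ k, τ k = k + ∑ i, S (A i) (τ k) x := by
    intro k
    have h1 : ∑ m ∈ Finset.Ioc 0 (τ k), (1:ℕ) = τ k := by simp
    calc τ k = ∑ m ∈ Finset.Ioc 0 (τ k), (1:ℕ) := h1.symm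
      _ = ∑ m ∈ Finset.Ioc 0 (τ k),
            (Set.indicator Y (fun _ => (1:ℕ)) (T^[m] x)
              + ∑ i, Set.indicator (A i) (fun _ => (1:ℕ)) (T^[m] x)) :=
        Finset.sum_congr rfl fun m _ => (hpart _).symm
      _ = (∑ m ∈ Finset.Ioc 0 (τ k), Set.indicator Y (fun _ => (1:ℕ)) (T^[m] x))
          + ∑ m ∈ Finset.Ioc 0 (τ k), ∑ i,
              Set.indicator (A i) (fun _ => (1:ℕ)) (T^[m] x) :=
        Finset.sum_add_distrib
      _ = k + ∑ i, S (A i) (τ k) x := by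
        rw [hYcount k, Finset.sum_comm]
        congr 1
        exact Finset.sum_congr rfl fun i _ => (hSIoc _ _).symm
  -- S is unbounded
  have hSunb : ∀ (jj : Fin d) (N : ℕ), ∃ v, N < S (A jj) v x := by
    intro jj N
    induction N with
    | zero =>
      obtain ⟨m, hm1, hmem⟩ := frequently_atTop.mp (hxA jj) 1
      obtain ⟨m', rfl⟩ : ∃ m', m = m' + 1 := ⟨m - 1, by omega⟩
      refine ⟨m' + 1, ?_⟩
      rw [hSstep, Set.indicator_of_mem hmem]
      omega
    | succ N ih =>
      obtain ⟨v, hv⟩ := ih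
      obtain ⟨m, hm1, hmem⟩ := frequently_atTop.mp (hxA jj) (v + 1)
      obtain ⟨m', rfl⟩ : ∃ m', m = m' + 1 := ⟨m - 1, by omega⟩
      have hle : S (A jj) v x ≤ S (A jj) m' x := hSmono _ _ _ (by omega)
      refine ⟨m' + 1, ?_⟩
      rw [hSstep, Set.indicator_of_mem hmem]
      omega
  -- translate the real inequalities into ℕ
  set N := Nat.floor t with hN
  have hset1 : {u : ℕ | t < (S (A j) u x : ℝ)} = {u : ℕ | N < S (A j) u x} := by
    ext u
    simp only [Set.mem_setOf_eq, hN]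
    exact (Nat.floor_lt ht).symm
  have hset2 : {u : ℕ | t < (η j u x : ℝ)} = {u : ℕ | N < η j u x} := by
    ext u
    simp only [Set.mem_setOf_eq, hN]
    exact (Nat.floor_lt ht).symm
  set n := ηinv j t x with hn
  have hnval : n = sInf {u : ℕ | N < η j u x} := by rw [hn, hηinv, hset2]
  have hne2 : {u : ℕ | N < η j u x}.Nonempty := by
    obtain ⟨v, hv⟩ := hSunb j N
    refine ⟨v, ?_⟩
    rw [Set.mem_setOf_eq, hηS]
    exact lt_of_lt_of_le hv (hSmono _ _ _ (le_trans (Nat.le_succ v) (hτge (v+1))))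
  have hnmem : N < η j n x := by
    have := Nat.sInf_mem hne2
    rw [← hnval] at this
    exact this
  set P := S (A j) (τ n) x with hP
  have hPle : P ≤ N := by
    rcases Nat.eq_zero_or_pos n with h0 | hpos
    · rw [hP, h0, hτ0, hS0]
      exact Nat.zero_le N
    · obtain ⟨n', hne⟩ : ∃ n', n = n' + 1 := ⟨n - 1, by omega⟩
      have hlt : n' < sInf {u : ℕ | N < η j u x} := by rw [← hnval]; omega
      have hnm := Nat.notMem_of_lt_sInf hlt
      rw [Set.mem_setOf_eq, not_lt, hηS] at hnm
      rw [hP, hne]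
      exact hnm
  have hηjn : N < S (A j) (τ (n+1)) x := by rwa [hηS] at hnmem
  -- the n-th excursion visits A j, hence lies entirely in A j
  have hwit : ∃ m0, τ n < m0 ∧ m0 < τ (n+1) ∧ T^[m0] x ∈ A j := by
    by_contra h
    push_neg at h
    have hblock0 : ∑ m ∈ Finset.Ioc (τ n) (τ (n+1)),
        Set.indicator (A j) (fun _ => (1:ℕ)) (T^[m] x) = 0 := by
      refine Finset.sum_eq_zero fun m hm => ?_
      obtain ⟨h1, h2⟩ := Finset.mem_Ioc.mp hm
      by_cases hmeq : m = τ (n+1)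
      · subst hmeq
        exact Set.indicator_of_notMem (Set.disjoint_right.mp (hdisjY j) (hτY n)) _
      · exact Set.indicator_of_notMem (h m h1 (lt_of_le_of_ne h2 hmeq)) _
    have hb := hSblock (A j) (τ n) (τ (n+1)) (le_of_lt (hτlt n))
    rw [hblock0] at hb
    omega
  have hallA : ∀ m, τ n < m → m < τ (n+1) → T^[m] x ∈ A j := by
    obtain ⟨m0, hm01, hm02, hm0A⟩ := hwit
    intro m hm1 hm2
    have hnotY := hτnotY n m hm1 hm2
    have hy : T^[m] x ∈ (⋃ i, A i) ∪ Y := hcover ▸ Set.mem_univ _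
    rcases hy with h | h
    swap
    · exact absurd h hnotY
    obtain ⟨i, hi⟩ := Set.mem_iUnion.mp h
    by_cases hij : i = j
    · rwa [← hij]
    exfalso
    rcases lt_trichotomy m m0 with hlt | heq | hgt
    · obtain ⟨k, hk1, hk2, hkY⟩ := hsep (T^[m] x) i j (m0 - m) hij hi
        (by rw [← Function.iterate_add_apply]
            have e : m0 - m + m = m0 := by omega
            rwa [e]) (by omega)
      rw [← Function.iterate_add_apply] at hkY
      exact hτnotY n (k + m) (by omega) (by omega) hkY
    · exact Set.disjoint_left.mp (hdisj i j hij) hi (heq ▸ hm0A)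
    · obtain ⟨k, hk1, hk2, hkY⟩ := hsep (T^[m0] x) j i (m - m0) (Ne.symm hij) hm0A
        (by rw [← Function.iterate_add_apply]
            have e : m - m0 + m0 = m := by omega
            rwa [e]) (by omega)
      rw [← Function.iterate_add_apply] at hkY
      exact hτnotY n (k + m0) (by omega) (by omega) hkY
  -- S grows by exactly one along the n-th excursion
  have hrun : ∀ m, m ≤ τ (n+1) - τ n - 1 → S (A j) (τ n + m) x = P + m := by
    intro m
    induction m with
    | zero => intro _; simp [hP]
    | succ m ih =>
      intro hm
      have hτn1 := hτlt n
      rw [show τ n + (m + 1) = (τ n + m) + 1 from rfl, hSstep, ih (by omega),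
        Set.indicator_of_mem (hallA (τ n + m + 1) (by omega) (by omega))]
      omega
  have hend : S (A j) (τ (n+1)) x = P + (τ (n+1) - τ n - 1) := by
    obtain ⟨c, hc⟩ : ∃ c, τ (n+1) = (τ n + c) + 1 :=
      ⟨τ (n+1) - τ n - 1, by have := hτlt n; omega⟩
    have hc2 : c = τ (n+1) - τ n - 1 := by omega
    rw [hc, hSstep, hrun c (by omega),
      Set.indicator_of_notMem (by
        rw [← hc]
        exact Set.disjoint_right.mp (hdisjY j) (hτY n))]
    omega
  have hq : N + 1 - P ≤ τ (n+1) - τ n - 1 := by omega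
  have hSU : S (A j) (τ n + (N + 1 - P)) x = N + 1 := by
    rw [hrun _ hq]
    omega
  have hSU1 : ∀ u, u < τ n + (N + 1 - P) → ¬ (N < S (A j) u x) := by
    intro u hu
    have h1 : S (A j) u x ≤ S (A j) (τ n + (N - P)) x := hSmono _ _ _ (by omega)
    rw [hrun (N - P) (by omega)] at h1
    omega
  have hdone : Sinv j t x = τ n + (N + 1 - P) := by
    rw [hSinv, hset1]
    have hmemU : (τ n + (N + 1 - P)) ∈ {u : ℕ | N < S (A j) u x} := by
      rw [Set.mem_setOf_eq, hSU]
      omega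
    refine le_antisymm (Nat.sInf_le hmemU) ?_
    by_contra hlt
    push_neg at hlt
    exact hSU1 _ hlt (Nat.sInf_mem ⟨_, hmemU⟩)
  -- conclude by arithmetic
  have hfloor : Nat.floor (t + 1) = N + 1 := by rw [hN]; exact Nat.floor_add_one ht
  have hsum : ∀ i, i ≠ j → η i n x = S (A i) (τ n) x := by
    intro i hij
    have hblock0 : ∑ m ∈ Finset.Ioc (τ n) (τ (n+1)),
        Set.indicator (A i) (fun _ => (1:ℕ)) (T^[m] x) = 0 := by
      refine Finset.sum_eq_zero fun m hm => ?_
      obtain ⟨h1, h2⟩ := Finset.mem_Ioc.mp hm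
      by_cases hmeq : m = τ (n+1)
      · subst hmeq
        exact Set.indicator_of_notMem (Set.disjoint_right.mp (hdisjY i) (hτY n)) _
      · exact Set.indicator_of_notMem
          (Set.disjoint_right.mp (hdisj i j hij)
            (hallA m h1 (lt_of_le_of_ne h2 hmeq))) _
    rw [hηS, hSblock (A i) (τ n) (τ (n+1)) (le_of_lt (hτlt n)), hblock0]
    omega
  have hτn2 : τ n = n + ∑ i, S (A i) (τ n) x := hτcount n
  rw [hdone, hfloor]
  have hsum2 : ∑ i ∈ Finset.univ.erase j, η i n x
      = ∑ i ∈ Finset.univ.erase j, S (A i) (τ n) x :=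
    Finset.sum_congr rfl fun i hi => hsum i (Finset.ne_of_mem_erase hi)
  have hsplit : S (A j) (τ n) x + ∑ i ∈ Finset.univ.erase j, S (A i) (τ n) x
      = ∑ i, S (A i) (τ n) x :=
    Finset.add_sum_erase _ (fun i => S (A i) (τ n) x) (Finset.mem_univ j)
  rw [hsum2]
  omega
end

section
/- For $n=1,\dots,\infty$ let $x_n,y_n\in D_0$ and fix $t\ge 0$. Assume: (i) if $t>0$ then $x_\infty^{-1}$ is continuous at $t$ (i.e., $x_\infty^{-1}(t-)=x_\infty^{-1}(t)$), and if $t=0$ then $x_\infty(0)=x_\infty^{-1}(0)=0$; moreover $y_\infty$ is continuous at $x_\infty^{-1}(t)$; (ii) there exist strictly increasing continuous bijections $\lambda_n$ of $[0,\infty)$ with $\sup_{[0,t_0]}|\lambda_n - \mathrm{id}|\to 0$ and $\sup_{[0,t_0]}|x_n\circ\lambda_n - x_\infty|\to 0$, $\sup_{[0,t_0]}|y_n\circ\lambda_n - y_\infty|\to 0$ for each $t_0>0$. Then $y_n(x_n^{-1}(t)) \to y_\infty(x_\infty^{-1}(t))$ as $n\to\infty$, where $x^{-1}(s)=\inf\{u>0: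 x(u)>s\}$. -/
open Set Filter

/-- Fujihara–Kawamura–Yano: Let `xₙ, yₙ, x∞, y∞ ∈ D₀` and fix `t ≥ 0`.
If (i) the generalized inverse `x∞⁻¹` is left-continuous at `t` (for `t > 0`; for `t = 0`
assume `x∞(0) = x∞⁻¹(0) = 0`) and `y∞` is continuous at `x∞⁻¹(t)`, and (ii) `(xₙ, yₙ)`
converges jointly to `(x∞, y∞)` in the Skorokhod `J₁`-sense via a common sequence of time
changes `λₙ`, then `yₙ(xₙ⁻¹(t)) → y∞(x∞⁻¹(t))`, where `x⁻¹(s) = inf{u > 0 : x(u) > s}`. -/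
theorem stmt15 (x y : ℕ → ℝ → ℝ) (xinf yinf : ℝ → ℝ) (lam : ℕ → ℝ → ℝ)
    (hx_nonneg : ∀ n s, 0 ≤ s → 0 ≤ x n s)
    (hx_mono : ∀ n s t, 0 ≤ s → s ≤ t → x n s ≤ x n t)
    (hx_rc : ∀ n t, 0 ≤ t → ContinuousWithinAt (x n) (Set.Ici t) t)
    (hx_top : ∀ n, Tendsto (x n) atTop atTop)
    (hy_nonneg : ∀ n s, 0 ≤ s → 0 ≤ y n s)
    (hy_mono : ∀ n s t, 0 ≤ s → s ≤ t → y n s ≤ y n t)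
    (hy_rc : ∀ n t, 0 ≤ t → ContinuousWithinAt (y n) (Set.Ici t) t)
    (hy_top : ∀ n, Tendsto (y n) atTop atTop)
    (hxinf_nonneg : ∀ s, 0 ≤ s → 0 ≤ xinf s)
    (hxinf_mono : ∀ s t, 0 ≤ s → s ≤ t → xinf s ≤ xinf t)
    (hxinf_rc : ∀ t, 0 ≤ t → ContinuousWithinAt xinf (Set.Ici t) t)
    (hxinf_top : Tendsto xinf atTop atTop)
    (hyinf_nonneg : ∀ s, 0 ≤ s → 0 ≤ yinf s)
    (hyinf_mono : ∀ s t, 0 ≤ s → s ≤ t → yinf s ≤ yinf t)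
    (hyinf_rc : ∀ t, 0 ≤ t → ContinuousWithinAt yinf (Set.Ici t) t)
    (hyinf_top : Tendsto yinf atTop atTop)
    (inv : (ℝ → ℝ) → ℝ → ℝ)
    (hinv : ∀ f s, inv f s = sInf {u : ℝ | 0 < u ∧ s < f u})
    (t : ℝ) (ht : 0 ≤ t)
    (hi_pos : 0 < t → ContinuousWithinAt (inv xinf) (Set.Iio t) t)
    (hi_zero : t = 0 → xinf 0 = 0 ∧ inv xinf 0 = 0)
    (hy_cont : ContinuousAt yinf (inv xinf t))
    (hlam_mono : ∀ n, StrictMono (lam n))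
    (hlam_cont : ∀ n, Continuous (lam n))
    (hlam_zero : ∀ n, lam n 0 = 0)
    (hlam_surj : ∀ n, Function.Surjective (lam n))
    (hconv : ∀ t0 > (0:ℝ), ∀ ε > (0:ℝ), ∃ N, ∀ n ≥ N, ∀ s ∈ Set.Icc (0:ℝ) t0,
      |lam n s - s| < ε ∧ |x n (lam n s) - xinf s| < ε ∧ |y n (lam n s) - yinf s| < ε) :
    Tendsto (fun n => y n (inv (x n) t)) atTop (nhds (yinf (inv xinf t))) := by
  set T := inv xinf t with hT
  have hSne : ∀ n : ℕ, Set.Nonempty {u : ℝ | 0 < u ∧ t < x n u} := by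
    intro n
    obtain ⟨u, hu1, hu2⟩ :=
      (((hx_top n).eventually_gt_atTop t).and (eventually_gt_atTop 0)).exists
    exact ⟨u, hu2, hu1⟩
  have hSbdd : ∀ n, BddBelow {u : ℝ | 0 < u ∧ t < x n u} := fun n =>
    ⟨0, fun u hu => le_of_lt hu.1⟩
  have hs_nonneg : ∀ n, 0 ≤ inv (x n) t := by
    intro n
    rw [hinv]
    exact le_csInf (hSne n) (fun u hu => le_of_lt hu.1)
  have hSinfne : Set.Nonempty {u : ℝ | 0 < u ∧ t < xinf u} := by
    obtain ⟨u, hu1, hu2⟩ :=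
      ((hxinf_top.eventually_gt_atTop t).and (eventually_gt_atTop 0)).exists
    exact ⟨u, hu2, hu1⟩
  have hSinfbdd : BddBelow {u : ℝ | 0 < u ∧ t < xinf u} := ⟨0, fun u hu => le_of_lt hu.1⟩
  have hTdef : T = sInf {u : ℝ | 0 < u ∧ t < xinf u} := by rw [hT, hinv]
  have hT_nonneg : 0 ≤ T := by
    rw [hTdef]; exact le_csInf hSinfne (fun u hu => le_of_lt hu.1)
  -- Upper bound
  have hupper : ∀ ε > (0:ℝ), ∃ N, ∀ n ≥ N, inv (x n) t < T + ε := by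
    intro ε hε
    obtain ⟨u, hu0, hut, hult⟩ : ∃ u, 0 < u ∧ t < xinf u ∧ u < T + ε / 2 := by
      obtain ⟨u, hu, hlt⟩ := Real.lt_sInf_add_pos hSinfne (half_pos hε)
      exact ⟨u, hu.1, hu.2, by rw [hTdef]; exact hlt⟩
    have hδ : 0 < (xinf u - t) / 2 := by linarith
    obtain ⟨N, hN⟩ := hconv (u + 1) (by linarith) (min ((xinf u - t) / 2) (ε / 2))
      (lt_min hδ (half_pos hε))
    refine ⟨N, fun n hn => ?_⟩
    obtain ⟨hl, hxc, -⟩ := hN n hn u ⟨hu0.le, by linarith⟩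
    have h1 : t < x n (lam n u) := by
      have := abs_lt.mp (lt_of_lt_of_le hxc (min_le_left _ _))
      linarith [this.1]
    have h2 : 0 < lam n u := by
      have := hlam_mono n hu0
      rwa [hlam_zero n] at this
    have h3 : lam n u < u + ε / 2 := by
      have := abs_lt.mp (lt_of_lt_of_le hl (min_le_right _ _))
      linarith [this.2]
    have h4 : inv (x n) t ≤ lam n u := by
      rw [hinv]; exact csInf_le (hSbdd n) ⟨h2, h1⟩
    linarith
  -- Lower bound
  have hlower : ∀ ε > (0:ℝ), ∃ N, ∀ n ≥ N, T - ε < inv (x n) t := by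
    intro ε hε
    by_cases hcase : T - ε / 2 ≤ 0
    · exact ⟨0, fun n _ => by have := hs_nonneg n; linarith⟩
    push_neg at hcase
    have ht' : 0 < t := by
      rcases ht.eq_or_lt with h | h
      · exfalso
        have hTz : T = 0 := by rw [hT, ← h]; exact (hi_zero h.symm).2
        linarith
      · exact h
    have hev1 : ∀ᶠ s in nhdsWithin t (Set.Iio t), |inv xinf s - T| < ε / 2 := by
      have h1 := (hi_pos ht') (Metric.ball_mem_nhds (inv xinf t) (half_pos hε))
      filter_upwards [h1] with s hs
      have h2 : dist (inv xinf s) (inv xinf t) < ε / 2 := hs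
      rw [Real.dist_eq] at h2
      exact h2
    have hev2 : ∀ᶠ s in nhdsWithin t (Set.Iio t), 0 < s ∧ s < t := by
      have : Set.Ioo (0:ℝ) t ∈ nhdsWithin t (Set.Iio t) := by
        rw [← Set.Ioi_inter_Iio]
        exact inter_mem (mem_nhdsWithin_of_mem_nhds (Ioi_mem_nhds ht')) self_mem_nhdsWithin
      filter_upwards [this] with s hs using ⟨hs.1, hs.2⟩
    obtain ⟨s, hs1, hs0, hst⟩ := (hev1.and hev2).exists
    obtain ⟨hs1, ⟨hs0, hst⟩⟩ : (|inv xinf s - T| < ε / 2) ∧ (0 < s ∧ s < t) := ⟨hs1, hs0, hst⟩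
    have hxu0 : xinf (T - ε / 2) ≤ s := by
      by_contra hcon
      push_neg at hcon
      have : inv xinf s ≤ T - ε / 2 := by
        rw [hinv]
        exact csInf_le ⟨0, fun v hv => le_of_lt hv.1⟩ ⟨hcase, hcon⟩
      have := abs_lt.mp hs1
      linarith [this.1]
    have hδ : 0 < (t - s) / 2 := by linarith
    obtain ⟨N, hN⟩ := hconv (T - ε / 2 + 1) (by linarith) (min ((t - s) / 2) (ε / 2))
      (lt_min hδ (half_pos hε))
    refine ⟨N, fun n hn => ?_⟩
    obtain ⟨hl, hxc, -⟩ := hN n hn (T - ε / 2) ⟨hcase.le, by linarith⟩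
    have hxlt : x n (lam n (T - ε / 2)) < t := by
      have := abs_lt.mp (lt_of_lt_of_le hxc (min_le_left _ _))
      linarith [this.2]
    have hlgt : T - ε < lam n (T - ε / 2) := by
      have := abs_lt.mp (lt_of_lt_of_le hl (min_le_right _ _))
      linarith [this.1]
    have hlow : lam n (T - ε / 2) ≤ inv (x n) t := by
      rw [hinv]
      refine le_csInf (hSne n) (fun v hv => ?_)
      by_contra hvl
      push_neg at hvl
      have := hx_mono n v (lam n (T - ε / 2)) hv.1.le hvl.le
      linarith [hv.2]
    linarith
  -- Convergence of the inverses
  have hsT : Tendsto (fun n => inv (x n) t) atTop (nhds T) := by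
    rw [Metric.tendsto_atTop]
    intro ε hε
    obtain ⟨N1, h1⟩ := hupper ε hε
    obtain ⟨N2, h2⟩ := hlower ε hε
    refine ⟨max N1 N2, fun n hn => ?_⟩
    rw [Real.dist_eq, abs_lt]
    constructor
    · have := h2 n (le_trans (le_max_right _ _) hn); linarith
    · have := h1 n (le_trans (le_max_left _ _) hn); linarith
  -- Final step
  rw [Metric.tendsto_atTop]
  intro ε hε
  obtain ⟨δ, hδ, hδy⟩ : ∃ δ > (0:ℝ), ∀ s, |s - T| < δ → |yinf s - yinf T| < ε / 2 := by
    obtain ⟨δ, hδ, h⟩ := Metric.continuousAt_iff.mp hy_cont (ε / 2) (half_pos hε)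
    refine ⟨δ, hδ, fun s hs => ?_⟩
    have := h (by rwa [Real.dist_eq])
    rwa [Real.dist_eq] at this
  set δ' := min (δ / 3) 1 with hδ'def
  have hδ'pos : 0 < δ' := lt_min (by linarith) one_pos
  have hδ'le1 : δ' ≤ 1 := min_le_right _ _
  have hδ'leδ : δ' ≤ δ / 3 := min_le_left _ _
  obtain ⟨N1, hN1⟩ := Metric.tendsto_atTop.mp hsT δ' hδ'pos
  obtain ⟨N2, hN2⟩ := hconv (T + 2) (by linarith) (min δ' (ε / 2))
    (lt_min hδ'pos (half_pos hε))
  refine ⟨max N1 N2, fun n hn => ?_⟩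
  have hn1 := hN1 n (le_trans (le_max_left _ _) hn)
  have hn2 := hN2 n (le_trans (le_max_right _ _) hn)
  rw [Real.dist_eq] at hn1 ⊢
  obtain ⟨u, hu⟩ := hlam_surj n (inv (x n) t)
  have hu0 : 0 ≤ u := by
    have h0 : lam n 0 ≤ lam n u := by
      rw [hlam_zero n, hu]; exact hs_nonneg n
    exact (hlam_mono n).le_iff_le.mp h0
  have hs_lt : inv (x n) t < T + δ' := by
    have := abs_lt.mp hn1; linarith [this.2]
  have h3 := (hn2 (T + 2 * δ') ⟨by linarith, by linarith⟩).1
  have h3' : T + δ' < lam n (T + 2 * δ') := by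
    have := abs_lt.mp (lt_of_lt_of_le h3 (min_le_left _ _)); linarith [this.1]
  have huub : u < T + 2 * δ' := by
    have hlt : lam n u < lam n (T + 2 * δ') := by rw [hu]; linarith
    exact (hlam_mono n).lt_iff_lt.mp hlt
  obtain ⟨hl, -, hyc⟩ := hn2 u ⟨hu0, by linarith⟩
  have hl' : |inv (x n) t - u| < δ' := by
    rw [← hu]; exact lt_of_lt_of_le hl (min_le_left _ _)
  have hyc' : |y n (inv (x n) t) - yinf u| < ε / 2 := by
    rw [← hu]; exact lt_of_lt_of_le hyc (min_le_right _ _)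
  have huT : |u - T| < δ := by
    have a := abs_lt.mp hl'
    have b := abs_lt.mp hn1
    rw [abs_lt]
    constructor <;> linarith
  have hy1 := hδy u huT
  calc |y n (inv (x n) t) - yinf T|
      ≤ |y n (inv (x n) t) - yinf u| + |yinf u - yinf T| := abs_sub_le _ _ _
    _ < ε / 2 + ε / 2 := add_lt_add hyc' hy1
    _ = ε := by ring
end
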